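/- arXiv:1808.09738 — 2 statements merged into one kernel-verified Lean document; each statement's English description precedes it below -/
import Mathlib

section
/- Let 𝒳 be a non-trivial well-pointed coherent category in which the unique morphism X → 1 is a retraction for every X ≇ 0, and assume 𝒳 is mono-complete. Then for every morphism f : X → Y in 𝒳 and every subset T ⊆ pt(X), one has pt f (cl T) = cl(pt f (T)), where cl denotes the closure operator on pt(X) on the left and on pt(Y) on the right. -/
open CategoryTheory CategoryTheory.Limits Opposite

universe w' w v u

namespace Paper

variable {C : Type u} [Category.{v} C]

/-- "X ≇ 0": the object `X` is not initial. -/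
def NonInitial (X : C) : Prop := IsInitial X → False

/-- The category is non-trivial: `0 ≇ 1`, i.e. no object is both initial and terminal. -/
def NonTrivialCat (C : Type u) [Category.{v} C] : Prop :=
  ∀ X : C, IsInitial X → IsTerminal X → False

section Terminal
variable (C) [HasTerminal C]

/-- The category is well-pointed: the functor of points `pt = Hom(1, -)` is faithful. -/
def WellPointed : Prop :=
  ∀ ⦃X Y : C⦄ (f g : X ⟶ Y), (∀ p : ⊤_ C ⟶ X, p ≫ f = p ≫ g) → f = g

/-- The unique morphism `X ⟶ 1` is a retraction for every `X ≇ 0`. -/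
def EnoughPoints : Prop :=
  ∀ X : C, NonInitial X → Nonempty (SplitEpi (terminal.from X))

end Terminal

/-- `b` is the bottom element of `Sub(X)`. -/
def IsBotIn {X : C} (b : Subobject X) : Prop := ∀ S : Subobject X, b ≤ S

/-- `S` is an atom of the subobject lattice `Sub(X)`. -/
def IsAtomIn {X : C} (S : Subobject X) : Prop :=
  ¬ IsBotIn S ∧ ∀ T : Subobject X, T < S → IsBotIn T

/-- `Sub(X)` is atomic: every subobject is the supremum of the atoms below it. -/
def AtomicSubobjects (X : C) : Prop :=
  ∀ S : Subobject X, IsLUB {A : Subobject X | IsAtomIn A ∧ A ≤ S} S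

/-- `S` is a complemented subobject: it has a complement `T` with `S ⊓ T = ⊥`, `S ⊔ T = ⊤`. -/
def IsComplementedSub {X : C} (S : Subobject X) : Prop :=
  ∃ T m : Subobject X, IsGLB {S, T} m ∧ IsBotIn m ∧ IsLUB {S, T} ⊤

/-- A (non-empty) filter of the Boolean center `B(X)` of `Sub(X)`. -/
structure CenterFilter (X : C) where
  carrier : Set (Subobject X)
  mem_complemented : ∀ S ∈ carrier, IsComplementedSub S
  nonempty : carrier.Nonempty
  inf_mem : ∀ S ∈ carrier, ∀ T ∈ carrier, ∀ m : Subobject X, IsGLB {S, T} m → m ∈ carrier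
  mem_of_le : ∀ S ∈ carrier, ∀ T : Subobject X, IsComplementedSub T → S ≤ T → T ∈ carrier

theorem CenterFilter.ext' {X : C} {F G : CenterFilter X} (h : F.carrier = G.carrier) : F = G := by
  cases F; cases G; cases h; rfl

/-- Filters of the Boolean center, ordered by reverse inclusion. -/
instance (X : C) : PartialOrder (CenterFilter X) where
  le F G := G.carrier ⊆ F.carrier
  le_refl _ := subset_rfl
  le_trans _ _ _ h1 h2 := fun _ hx => h1 (h2 hx)
  le_antisymm _ _ h1 h2 := CenterFilter.ext' (Set.Subset.antisymm h2 h1)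

/-- An object `X` is filtral if `Sub(X)` is isomorphic, as a lattice, to the lattice of
non-empty filters of the Boolean center of `Sub(X)`. -/
def FiltralObject (X : C) : Prop :=
  Nonempty (Subobject X ≃o CenterFilter X)

/-- A category is filtral if every object is covered by a filtral one. -/
def Filtral (C : Type u) [Category.{v} C] : Prop :=
  ∀ Y : C, ∃ (X : C) (f : X ⟶ Y), Nonempty (RegularEpi f) ∧ FiltralObject X

/-- `Sub(X)` is a complete lattice (every subset has an infimum). -/
def MonoCompleteAt (X : C) : Prop :=
  ∀ s : Set (Subobject X), ∃ m : Subobject X, IsGLB s m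

/-- The category is mono-complete: every subobject poset is a complete lattice. -/
def MonoComplete (C : Type u) [Category.{v} C] : Prop := ∀ X : C, MonoCompleteAt X

section Points
variable [HasTerminal C]

/-- `Vs S` is the set of points of `X` factoring through the subobject `S`. -/
def Vs {X : C} (S : Subobject X) : Set (⊤_ C ⟶ X) := {p | S.Factors p}

open Classical in
/-- `Cg T` is the smallest subobject of `X` through which every point in `T` factors
(defined whenever the relevant infimum exists). -/
noncomputable def Cg {X : C} (T : Set (⊤_ C ⟶ X)) : Subobject X :=
  if h : ∃ m : Subobject X, IsGLB {S : Subobject X | ∀ p ∈ T, S.Factors p} m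
  then h.choose else ⊤

/-- The closure operator `cl = Vs ∘ Cg` on the power set of `pt X`. -/
noncomputable def cl {X : C} (T : Set (⊤_ C ⟶ X)) : Set (⊤_ C ⟶ X) := Vs (Cg T)

end Points

/-- Images are stable under pullback (together with finite limits and images, this is
the definition of a regular category). -/
class StableImages (C : Type u) [Category.{v} C] [HasFiniteLimits C] [HasImages C] : Prop where
  image_pullback : ∀ {X Y Z : C} (f : X ⟶ Y) (g : Z ⟶ Y),
    (Subobject.pullback g).obj (imageSubobject f) = imageSubobject (pullback.snd f g)

/-- The extra structure of a coherent category: each `Sub(X)` has finite joins and these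
are preserved by the pullback functors. -/
class CoherentJoins (C : Type u) [Category.{v} C] [HasPullbacks C] : Prop where
  exists_bot : ∀ X : C, ∃ b : Subobject X, IsBotIn b
  exists_sup : ∀ {X : C} (S T : Subobject X), ∃ U : Subobject X, IsLUB {S, T} U
  pullback_bot : ∀ {X Y : C} (f : X ⟶ Y) (b : Subobject Y),
    IsBotIn b → IsBotIn ((Subobject.pullback f).obj b)
  pullback_sup : ∀ {X Y : C} (f : X ⟶ Y) (S T U : Subobject Y), IsLUB {S, T} U →
    IsLUB {(Subobject.pullback f).obj S, (Subobject.pullback f).obj T}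
      ((Subobject.pullback f).obj U)

/-- An internal equivalence relation: a jointly-monic pair which is reflexive, symmetric and
transitive (expressed via generalised elements). -/
structure IsEquivRelPair {R X : C} (r₁ r₂ : R ⟶ X) : Prop where
  jointlyMono : ∀ {Z : C} (a b : Z ⟶ R), a ≫ r₁ = b ≫ r₁ → a ≫ r₂ = b ≫ r₂ → a = b
  refl : ∀ {Z : C} (a : Z ⟶ X), ∃ h : Z ⟶ R, h ≫ r₁ = a ∧ h ≫ r₂ = a
  symm : ∀ {Z : C} (a b : Z ⟶ X), (∃ h : Z ⟶ R, h ≫ r₁ = a ∧ h ≫ r₂ = b) →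
    ∃ h : Z ⟶ R, h ≫ r₁ = b ∧ h ≫ r₂ = a
  trans : ∀ {Z : C} (a b c : Z ⟶ X), (∃ h : Z ⟶ R, h ≫ r₁ = a ∧ h ≫ r₂ = b) →
    (∃ h : Z ⟶ R, h ≫ r₁ = b ∧ h ≫ r₂ = c) →
    ∃ h : Z ⟶ R, h ≫ r₁ = a ∧ h ≫ r₂ = c

/-- Every internal equivalence relation is effective: it is the kernel pair of its
coequaliser. -/
def EffectiveEquivRels (C : Type u) [Category.{v} C] : Prop :=
  ∀ {R X : C} (r₁ r₂ : R ⟶ X), IsEquivRelPair r₁ r₂ →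
    ∃ (Y : C) (q : X ⟶ Y) (w : r₁ ≫ q = r₂ ≫ q),
      Nonempty (IsColimit (Cofork.ofπ q w)) ∧ Nonempty (IsLimit (PullbackCone.mk r₁ r₂ w))

/-- An object is decidable if its diagonal is a complemented subobject of `X ⨯ X`. -/
def DecidableObj [HasBinaryProducts C] (X : C) : Prop :=
  ∃ (Y : C) (g : Y ⟶ X ⨯ X), Nonempty (IsColimit (BinaryCofan.mk (diag X) g))

/-- An object is pro-decidable if it is a codirected (cofiltered) limit of decidable objects. -/
def ProDecidableObj [HasBinaryProducts C] (X : C) : Prop :=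
  ∃ (J : Type v) (_ : SmallCategory J) (_ : IsCofiltered J) (D : J ⥤ C) (c : Cone D),
    (∀ j, DecidableObj (D.obj j)) ∧ Nonempty (IsLimit c) ∧ Nonempty (c.pt ≅ X)



/-! The inclusion `pt f (cl T) ⊆ cl (pt f T)` holds because `Cg ⊣ Vs` is a Galois connection
compatible with pulling back along `f`. For the converse, a point `r` of `cl (pt f T)` factors
through the image of `Cg T ⟶ X ⟶ Y`; by stability of images the pullback `P` of that map along
`r` has `P ⟶ 1` with image `⊤`. If `P ≇ 0`, a section `1 ⟶ P` yields a point of `Cg T` over `r`.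
If `P ≅ 0`, then `⊤` is the bottom of `Sub(1)`, hence of every `Sub(Z)`, which forces every
morphism to be an isomorphism, so `0 ≅ 1`. -/

theorem mk_le_iff_factors {X Y : C} (f : X ⟶ Y) [Mono f] (S : Subobject Y) :
    Subobject.mk f ≤ S ↔ S.Factors f :=
  ⟨fun h => Subobject.factors_of_le f h (Subobject.mk_factors_self f),
    fun h => Subobject.mk_le_of_comm (S.factorThru f h) (S.factorThru_arrow f h)⟩

theorem eq_top_of_factors_id {Z : C} {S : Subobject Z} (h : S.Factors (𝟙 Z)) : S = ⊤ :=
  top_le_iff.1 (Subobject.mk_eq_top_of_isIso (𝟙 Z) ▸ (mk_le_iff_factors _ _).2 h)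

theorem isIso_of_mono_of_isBotIn_top {Z W : C} (h : IsBotIn (⊤ : Subobject W)) (g : Z ⟶ W)
    [Mono g] : IsIso g :=
  (Subobject.isIso_iff_mk_eq_top g).2 (top_le_iff.1 (h _))

theorem hom_ext_of_isBotIn_top [HasEqualizers C] {Z W : C} (h : IsBotIn (⊤ : Subobject Z))
    (u v : Z ⟶ W) : u = v := by
  have := isIso_of_mono_of_isBotIn_top h (equalizer.ι u v)
  exact (cancel_epi (equalizer.ι u v)).1 (equalizer.condition u v)

theorem isBotIn_imageSubobject_of_isInitial [HasImages C] {Z Y : C} (hZ : IsInitial Z)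
    (g : Z ⟶ Y) : IsBotIn (imageSubobject g) :=
  fun S => imageSubobject_le g (hZ.to S) (hZ.hom_ext _ _)

section Points

variable [HasTerminal C]

theorem isBotIn_top_of_isBotIn_top_terminal [HasPullbacks C] [CoherentJoins C]
    (h : IsBotIn (⊤ : Subobject (⊤_ C))) (Z : C) : IsBotIn (⊤ : Subobject Z) :=
  Subobject.pullback_top (terminal.from Z) ▸ CoherentJoins.pullback_bot _ _ h

theorem Vs_pullback [HasPullbacks C] {X Y : C} (f : X ⟶ Y) (S : Subobject Y) :
    Vs ((Subobject.pullback f).obj S) = (· ≫ f) ⁻¹' Vs S :=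
  Set.ext fun p => pullback_factors_iff f S p

theorem image_Vs_subset_Vs_imageSubobject [HasImages C] {X Y : C} (f : X ⟶ Y)
    (S : Subobject X) : (· ≫ f) '' Vs S ⊆ Vs (imageSubobject (S.arrow ≫ f)) := by
  rintro _ ⟨q, hq : S.Factors q, rfl⟩
  have := imageSubobject_factors_comp_self (S.arrow ≫ f) (S.factorThru q hq)
  rwa [← Category.assoc, S.factorThru_arrow] at this

theorem Cg_isGLB {X : C} (hX : MonoCompleteAt X) (T : Set (⊤_ C ⟶ X)) :
    IsGLB {S : Subobject X | T ⊆ Vs S} (Cg T) := by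
  have hex := hX {S : Subobject X | ∀ p ∈ T, S.Factors p}
  rw [Cg, dif_pos hex]
  exact hex.choose_spec

theorem subset_cl {X : C} (hX : MonoCompleteAt X) (T : Set (⊤_ C ⟶ X)) : T ⊆ cl T :=
  fun p hp => (mk_le_iff_factors p _).1 <|
    (Cg_isGLB hX T).2 fun S hS => (mk_le_iff_factors p S).2 (hS hp)

theorem Cg_le_iff {X : C} (hX : MonoCompleteAt X) {T : Set (⊤_ C ⟶ X)} {S : Subobject X} :
    Cg T ≤ S ↔ T ⊆ Vs S :=
  ⟨fun h => (subset_cl hX T).trans fun p hp => Subobject.factors_of_le p h hp,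
    fun h => (Cg_isGLB hX T).1 h⟩

theorem image_cl_subset [HasPullbacks C] (hmc : MonoComplete C) {X Y : C} (f : X ⟶ Y)
    (T : Set (⊤_ C ⟶ X)) : (· ≫ f) '' cl T ⊆ cl ((· ≫ f) '' T) := by
  have hle : Cg T ≤ (Subobject.pullback f).obj (Cg ((· ≫ f) '' T)) := by
    rw [Cg_le_iff (hmc X), Vs_pullback]
    exact Set.image_subset_iff.1 (subset_cl (hmc Y) _)
  rintro _ ⟨p, hp, rfl⟩
  exact (pullback_factors_iff f _ p).1 (Subobject.factors_of_le p hle hp)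

end Points

theorem nonInitial_of_imageSubobject_eq_top [HasFiniteLimits C] [HasImages C] [CoherentJoins C]
    (hnt : NonTrivialCat C) {Z : C} (h : imageSubobject (terminal.from Z) = ⊤) :
    NonInitial Z := by
  intro hZ
  have hbot : ∀ W : C, IsBotIn (⊤ : Subobject W) :=
    isBotIn_top_of_isBotIn_top_terminal (h ▸ isBotIn_imageSubobject_of_isInitial hZ _)
  have : Mono (terminal.from Z) := ⟨fun u v _ => hom_ext_of_isBotIn_top (hbot _) u v⟩
  have := isIso_of_mono_of_isBotIn_top (hbot _) (terminal.from Z)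
  exact hnt Z hZ (terminalIsTerminal.ofIso (asIso (terminal.from Z)).symm)

theorem Vs_imageSubobject_subset_range [HasFiniteLimits C] [HasImages C] [StableImages C]
    [CoherentJoins C] (hnt : NonTrivialCat C) (hpt : EnoughPoints C) {A Y : C} (g : A ⟶ Y) :
    Vs (imageSubobject g) ⊆ Set.range (· ≫ g) := by
  intro r hr
  have htop : imageSubobject (terminal.from (pullback g r)) = ⊤ := by
    rw [terminal.hom_ext (terminal.from _) (pullback.snd g r), ← StableImages.image_pullback]
    exact eq_top_of_factors_id ((pullback_factors_iff r _ _).2 (by rwa [Category.id_comp]))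
  obtain ⟨s⟩ := hpt _ (nonInitial_of_imageSubobject_eq_top hnt htop)
  refine ⟨s.section_ ≫ pullback.fst g r, ?_⟩
  dsimp only
  rw [Category.assoc, pullback.condition, ← Category.assoc,
    terminal.hom_ext (s.section_ ≫ _) (𝟙 _), Category.id_comp]

theorem cl_image_subset [HasFiniteLimits C] [HasImages C] [StableImages C] [CoherentJoins C]
    (hnt : NonTrivialCat C) (hpt : EnoughPoints C) (hmc : MonoComplete C) {X Y : C}
    (f : X ⟶ Y) (T : Set (⊤_ C ⟶ X)) : cl ((· ≫ f) '' T) ⊆ (· ≫ f) '' cl T := by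
  have hle : Cg ((· ≫ f) '' T) ≤ imageSubobject ((Cg T).arrow ≫ f) :=
    (Cg_le_iff (hmc Y)).2 <|
      (Set.image_mono (subset_cl (hmc X) T)).trans (image_Vs_subset_Vs_imageSubobject f _)
  intro r hr
  obtain ⟨a, rfl⟩ :=
    Vs_imageSubobject_subset_range hnt hpt _ (Subobject.factors_of_le r hle hr)
  exact ⟨a ≫ (Cg T).arrow, Subobject.factors_comp_arrow a, Category.assoc _ _ _⟩

theorem pt_image_cl_general
    [HasFiniteLimits C] [HasImages C] [StableImages C] [CoherentJoins C]
    (hnt : NonTrivialCat C) (hpt : EnoughPoints C)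
    (hmc : MonoComplete C) :
    ∀ {X Y : C} (f : X ⟶ Y) (T : Set (⊤_ C ⟶ X)),
      (fun p : ⊤_ C ⟶ X => p ≫ f) '' cl T = cl ((fun p : ⊤_ C ⟶ X => p ≫ f) '' T) :=
  fun f T => (image_cl_subset hmc f T).antisymm (cl_image_subset hnt hpt hmc f T)

/-- For every morphism `f : X ⟶ Y` and every `T ⊆ pt X`, `pt f (cl T) = cl (pt f T)`. -/
theorem pt_image_cl
    [WellPowered.{v} C] [HasFiniteLimits C] [HasImages C] [StableImages C] [CoherentJoins C]
    (hnt : NonTrivialCat C) (hwp : WellPointed C) (hpt : EnoughPoints C)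
    (hmc : MonoComplete C) :
    ∀ {X Y : C} (f : X ⟶ Y) (T : Set (⊤_ C ⟶ X)),
      (fun p : ⊤_ C ⟶ X => p ≫ f) '' cl T = cl ((fun p : ⊤_ C ⟶ X => p ≫ f) '' T) :=
  pt_image_cl_general hnt hpt hmc

end Paper
end

section
/- Let 𝒳 be a non-trivial well-pointed coherent category in which the unique morphism X → 1 is a retraction for every X ≇ 0, and assume 𝒳 is mono-complete. Then for every object X of 𝒳 the closure operator cl on the power set of pt(X) is topological: cl(∅) = ∅ and cl(T₁ ∪ T₂) = cl(T₁) ∪ cl(T₂) for all T₁, T₂ ⊆ pt(X). -/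
open CategoryTheory CategoryTheory.Limits Opposite

universe w' w v u

namespace Paper

variable {C : Type u} [Category.{v} C]

/-!
Pulling back along a point `p : 1 ⟶ X` reduces everything to subobjects of `1`, and each of
these either contains the point `𝟙` or is initial, because `X ⟶ 1` splits for every `X ≇ 0`.
Since pullback preserves binary joins, a point of `S ⊔ S'` is thus a point of `S` or of `S'`.
No point lies in the bottom subobject: otherwise every mono into `1` would split, so any two
morphisms out of `1` would agree (split their equalizer), well-pointedness would make the
category thin, and `1` would be initial, contradicting `0 ≇ 1`.
-/

lemma isSplitEpi_of_factors_isBotIn {X Y Z : C} {b : Subobject X} (hb : IsBotIn b)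
    (p : Z ⟶ X) [Mono p] (hp : b.Factors p) (m : Y ⟶ Z) [Mono m] : IsSplitEpi m := by
  obtain ⟨l, hl⟩ : ∃ l : Z ⟶ Y, l ≫ m ≫ p = p :=
    (Subobject.mk_factors_iff (m ≫ p) p).1 (Subobject.factors_of_le p (hb _) hp)
  exact IsSplitEpi.mk' ⟨l, (cancel_mono p).1 (by rw [Category.assoc, Category.id_comp, hl])⟩

lemma eq_of_forall_mono_isSplitEpi [HasEqualizers C] {Z W : C}
    (hsplit : ∀ (Y : C) (m : Y ⟶ Z), Mono m → IsSplitEpi m) (q r : Z ⟶ W) : q = r := by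
  have := hsplit _ (equalizer.ι q r) inferInstance
  exact (cancel_epi (equalizer.ι q r)).1 (equalizer.condition q r)

section Points

variable [HasTerminal C]

noncomputable def isInitialTerminalOfIsThin (hpt : EnoughPoints C) (hthin : Quiver.IsThin C)
    (hsplit : ∀ (Y : C) (m : Y ⟶ ⊤_ C), Mono m → IsSplitEpi m) : IsInitial (⊤_ C) := by
  refine IsInitial.ofUniqueHom (fun Y => ?_) (fun _ _ => (hthin _ _).elim _ _)
  by_cases hY : Nonempty (IsInitial Y)
  · have := hsplit _ (hY.some.to (⊤_ C)) ⟨fun a b _ => (hthin _ _).elim a b⟩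
    exact section_ (hY.some.to (⊤_ C))
  · exact (hpt Y fun hi => hY ⟨hi⟩).some.section_

lemma not_factors_of_isBotIn (hnt : NonTrivialCat C) (hwp : WellPointed C)
    (hpt : EnoughPoints C) [HasEqualizers C] {X : C} {b : Subobject X} (hb : IsBotIn b)
    (p : ⊤_ C ⟶ X) : ¬ b.Factors p := by
  intro hp
  have : Mono p := terminalIsTerminal.mono_from p
  have hsplit : ∀ (Y : C) (m : Y ⟶ ⊤_ C), Mono m → IsSplitEpi m :=
    fun _ m _ => isSplitEpi_of_factors_isBotIn hb p hp m
  have hthin : Quiver.IsThin C := fun _ _ =>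
    ⟨fun f g => hwp f g fun _ => eq_of_forall_mono_isSplitEpi hsplit _ _⟩
  exact hnt _ (isInitialTerminalOfIsThin hpt hthin hsplit) terminalIsTerminal

lemma factors_id_or_isInitial (hpt : EnoughPoints C) (A : Subobject (⊤_ C)) :
    A.Factors (𝟙 (⊤_ C)) ∨ Nonempty (IsInitial (A : C)) := by
  by_cases hA : Nonempty (IsInitial (A : C))
  · exact Or.inr hA
  · left
    let s := (hpt (A : C) fun hi => hA ⟨hi⟩).some.section_
    simpa only [Subsingleton.elim (s ≫ A.arrow) (𝟙 _)] using Subobject.factors_comp_arrow s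

lemma factors_id_or_of_isLUB (hpt : EnoughPoints C) {A B U : Subobject (⊤_ C)}
    (hU : IsLUB {A, B} U) (h : U.Factors (𝟙 (⊤_ C))) :
    A.Factors (𝟙 (⊤_ C)) ∨ B.Factors (𝟙 (⊤_ C)) := by
  rcases factors_id_or_isInitial hpt A with hA | hA
  · exact Or.inl hA
  · have hAB : A ≤ B := Subobject.le_of_comm (hA.some.to _) (hA.some.hom_ext _ _)
    have hUB : U ≤ B := hU.2 <| by
      rintro _ (rfl | rfl)
      exacts [hAB, le_rfl]
    exact Or.inr (Subobject.factors_of_le _ hUB h)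

lemma Vs_mono {X : C} {S T : Subobject X} (h : S ≤ T) : Vs S ⊆ Vs T :=
  fun p hp => Subobject.factors_of_le p h hp

lemma Vs_eq_empty_of_isBotIn (hnt : NonTrivialCat C) (hwp : WellPointed C)
    (hpt : EnoughPoints C) [HasEqualizers C] {X : C} {b : Subobject X} (hb : IsBotIn b) :
    Vs b = ∅ :=
  Set.eq_empty_of_forall_notMem fun p => not_factors_of_isBotIn hnt hwp hpt hb p

lemma Vs_eq_union_of_isLUB [HasPullbacks C] [CoherentJoins C] (hpt : EnoughPoints C) {X : C}
    {S S' U : Subobject X} (hU : IsLUB {S, S'} U) : Vs U = Vs S ∪ Vs S' := by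
  refine Set.Subset.antisymm (fun p hp => ?_)
    (Set.union_subset (Vs_mono (hU.1 (by simp))) (Vs_mono (hU.1 (by simp))))
  have hpU : ((Subobject.pullback p).obj U).Factors (𝟙 _) := by
    rwa [pullback_factors_iff, Category.id_comp]
  show S.Factors p ∨ S'.Factors p
  simpa only [pullback_factors_iff, Category.id_comp] using
    factors_id_or_of_isLUB hpt (CoherentJoins.pullback_sup p S S' U hU) hpU

section Cg

variable {X : C}

lemma isGLB_Cg (hmc : MonoCompleteAt X) (T : Set (⊤_ C ⟶ X)) :
    IsGLB {S : Subobject X | ∀ p ∈ T, S.Factors p} (Cg T) := by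
  have h : ∃ m : Subobject X, IsGLB {S : Subobject X | ∀ p ∈ T, S.Factors p} m := hmc _
  rw [Cg, dif_pos h]
  exact h.choose_spec

lemma subset_Vs_Cg (hmc : MonoCompleteAt X) (T : Set (⊤_ C ⟶ X)) : T ⊆ Vs (Cg T) := by
  intro p hp
  have : Mono p := terminalIsTerminal.mono_from p
  have hle : Subobject.mk p ≤ Cg T := (isGLB_Cg hmc T).2 fun S hS =>
    Subobject.mk_le_of_comm (S.factorThru p (hS p hp)) (Subobject.factorThru_arrow _ _ _)
  exact Subobject.factors_of_le p hle (Subobject.mk_factors_self p)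

lemma Cg_mono (hmc : MonoCompleteAt X) {T T' : Set (⊤_ C ⟶ X)} (h : T ⊆ T') :
    Cg T ≤ Cg T' :=
  (isGLB_Cg hmc T').2 fun _ hS => (isGLB_Cg hmc T).1 fun p hp => hS p (h hp)

lemma isBotIn_Cg_empty (hmc : MonoCompleteAt X) : IsBotIn (Cg (∅ : Set (⊤_ C ⟶ X))) :=
  fun _ => (isGLB_Cg hmc ∅).1 fun _ hq => absurd hq (Set.notMem_empty _)

lemma Cg_union_le (hmc : MonoCompleteAt X) {T₁ T₂ : Set (⊤_ C ⟶ X)} {U : Subobject X}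
    (hU : IsLUB {Cg T₁, Cg T₂} U) : Cg (T₁ ∪ T₂) ≤ U :=
  (isGLB_Cg hmc _).1 <| by
    rintro p (hp | hp)
    exacts [Vs_mono (hU.1 (by simp)) (subset_Vs_Cg hmc T₁ hp),
      Vs_mono (hU.1 (by simp)) (subset_Vs_Cg hmc T₂ hp)]

end Cg

end Points

theorem cl_topological_general
    [HasFiniteLimits C] [CoherentJoins C]
    (hnt : NonTrivialCat C) (hwp : WellPointed C) (hpt : EnoughPoints C)
    (hmc : MonoComplete C) (X : C) :
    cl (∅ : Set (⊤_ C ⟶ X)) = ∅ ∧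
      ∀ T₁ T₂ : Set (⊤_ C ⟶ X), cl (T₁ ∪ T₂) = cl T₁ ∪ cl T₂ := by
  refine ⟨Vs_eq_empty_of_isBotIn hnt hwp hpt (isBotIn_Cg_empty (hmc X)), fun T₁ T₂ => ?_⟩
  obtain ⟨U, hU⟩ := CoherentJoins.exists_sup (Cg T₁) (Cg T₂)
  refine Set.Subset.antisymm ?_ (Set.union_subset ?_ ?_)
  · exact (Vs_mono (Cg_union_le (hmc X) hU)).trans (Vs_eq_union_of_isLUB hpt hU).le
  · exact Vs_mono (Cg_mono (hmc X) Set.subset_union_left)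
  · exact Vs_mono (Cg_mono (hmc X) Set.subset_union_right)

/-- The closure operator `cl` is topological: it preserves finite unions. -/
theorem cl_topological
    [WellPowered.{v} C] [HasFiniteLimits C] [HasImages C] [StableImages C] [CoherentJoins C]
    (hnt : NonTrivialCat C) (hwp : WellPointed C) (hpt : EnoughPoints C)
    (hmc : MonoComplete C) (X : C) :
    cl (∅ : Set (⊤_ C ⟶ X)) = ∅ ∧
      ∀ T₁ T₂ : Set (⊤_ C ⟶ X), cl (T₁ ∪ T₂) = cl T₁ ∪ cl T₂ :=
  cl_topological_general hnt hwp hpt hmc X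

end Paper
end
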